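/- arXiv:2402.00096 — 5 statements merged into one kernel-verified Lean document; each statement's English description precedes it below -/
import Mathlib

section
/- In ℝ², each of the 7 edges of the polygonal chain (0,0)-(0,2)-(1/2, 2−√15/2)-(1,2)-(1,0)-(3/2, √15/2)-(2,0)-(2,2) has Euclidean length exactly 2, and every vertex of the chain lies in the square [0,2]×[0,2]. -/
noncomputable def pt2 (a b : ℝ) : EuclideanSpace ℝ (Fin 2) := WithLp.toLp 2 ![a, b]

/-- The vertices of the path `P_{3,3}` produced by the MΛI-algorithm. -/
noncomputable def P33 : Fin 8 → EuclideanSpace ℝ (Fin 2) :=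
  ![pt2 0 0, pt2 0 2, pt2 (1 / 2) (2 - Real.sqrt 15 / 2), pt2 1 2, pt2 1 0,
    pt2 (3 / 2) (Real.sqrt 15 / 2), pt2 2 0, pt2 2 2]

open Set

lemma dist_pt2 (a b c d : ℝ) :
    dist (pt2 a b) (pt2 c d) = √((a - c) ^ 2 + (b - d) ^ 2) := by
  simp [EuclideanSpace.dist_eq, pt2, Fin.sum_univ_two, Real.dist_eq, sq_abs]

lemma dist_pt2_eq_two {a b c d : ℝ} (h : (a - c) ^ 2 + (b - d) ^ 2 = 4) :
    dist (pt2 a b) (pt2 c d) = 2 := by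
  rw [dist_pt2, h, show (4 : ℝ) = 2 ^ 2 by norm_num, Real.sqrt_sq zero_le_two]

lemma pt2_apply_mem {s : Set ℝ} {a b : ℝ} (ha : a ∈ s) (hb : b ∈ s) (j : Fin 2) :
    pt2 a b j ∈ s := by
  fin_cases j
  exacts [ha, hb]

lemma sqrt_fifteen_mem_Icc : √15 ∈ Icc (0 : ℝ) 4 :=
  ⟨Real.sqrt_nonneg _, Real.sqrt_le_iff.mpr ⟨by norm_num, by norm_num⟩⟩

/-- Each of the 7 edges of the chain
`(0,0)-(0,2)-(1/2, 2−√15/2)-(1,2)-(1,0)-(3/2, √15/2)-(2,0)-(2,2)` has Euclidean length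
exactly `2`, and every vertex lies in the square `[0,2] × [0,2]`. -/
theorem stmt5 :
    (∀ i : Fin 7, dist (P33 i.castSucc) (P33 i.succ) = 2) ∧
    (∀ i : Fin 8, ∀ j : Fin 2, P33 i j ∈ Set.Icc (0 : ℝ) 2) := by
  have hsq : √15 ^ 2 = 15 := Real.sq_sqrt (by norm_num)
  obtain ⟨h0, h4⟩ := sqrt_fifteen_mem_Icc
  constructor
  · -- The slanted edges have run `1/2` and rise `√15/2`, and `1/4 + 15/4 = 4`.
    intro i
    fin_cases i <;> simp only [P33] <;> apply dist_pt2_eq_two <;> nlinarith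
  · intro i j
    fin_cases i <;> simp only [P33] <;> apply pt2_apply_mem <;> rw [mem_Icc] <;>
      constructor <;> linarith
end

section
/- The polygonal chain (0,0)-(0,2)-(1/2, 2−√15/2)-(1,2)-(1,0)-(3/2, √15/2)-(2,0)-(2,2) visits every point of the grid {0,1,2}×{0,1,2} ⊂ ℝ². -/
/-! Every column `{a} × {0,1,2}` of the grid lies on one of the three vertical edges
`(0,0)-(0,2)`, `(1,2)-(1,0)`, `(2,0)-(2,2)` of the chain; the slanted edges only connect them. -/

lemma pt2_mem_segment_of_mem_uIcc {x c d y : ℝ} (hy : y ∈ Set.uIcc c d) :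
    pt2 x y ∈ segment ℝ (pt2 x c) (pt2 x d) := by
  obtain ⟨s, t, hs, ht, hst, rfl⟩ := (segment_eq_uIcc c d).symm ▸ hy
  refine ⟨s, t, hs, ht, hst, ?_⟩
  ext i
  fin_cases i <;> simp [pt2, ← add_mul, hst]

lemma mem_uIcc_zero_two_of_mem {b : ℝ} (hb : b ∈ ({0, 1, 2} : Set ℝ)) :
    b ∈ Set.uIcc (0 : ℝ) 2 ∧ b ∈ Set.uIcc (2 : ℝ) 0 := by
  rw [Set.uIcc_comm 2 0, Set.uIcc_of_le zero_le_two]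
  rcases hb with rfl | rfl | rfl <;> norm_num

/-- The chain `(0,0)-(0,2)-(1/2, 2−√15/2)-(1,2)-(1,0)-(3/2, √15/2)-(2,0)-(2,2)` visits
every point of the grid `{0,1,2} × {0,1,2}`: each grid point lies on one of its closed
straight-line segments. -/
theorem stmt6 :
    ∀ a b : ℝ, a ∈ ({0, 1, 2} : Set ℝ) → b ∈ ({0, 1, 2} : Set ℝ) →
      ∃ i : Fin 7, pt2 a b ∈ segment ℝ (P33 i.castSucc) (P33 i.succ) := by
  intro a b ha hb
  obtain ⟨hb_up, hb_down⟩ := mem_uIcc_zero_two_of_mem hb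
  rcases ha with rfl | rfl | rfl
  · exact ⟨0, pt2_mem_segment_of_mem_uIcc hb_up⟩
  · exact ⟨3, pt2_mem_segment_of_mem_uIcc hb_down⟩
  · exact ⟨6, pt2_mem_segment_of_mem_uIcc hb_up⟩
end

section
/- The polygonal chain (1,2)-(2,0)-(0,1)-(2,2)-(1,0)-(0,2)-(2,1)-(0,0)-(√(5/2), √(5/2)) passes through all nine points of {0,1,2}×{0,1,2}. -/
/-- The vertices of the self-intersecting covering path `M_{3,3}`. -/
noncomputable def M33 : Fin 9 → EuclideanSpace ℝ (Fin 2) :=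
  ![pt2 1 2, pt2 2 0, pt2 0 1, pt2 2 2, pt2 1 0, pt2 0 2, pt2 2 1, pt2 0 0,
    pt2 (Real.sqrt (5 / 2)) (Real.sqrt (5 / 2))]

lemma pt2_zero : pt2 0 0 = 0 := by
  ext i; fin_cases i <;> rfl

lemma smul_pt2 (c a b : ℝ) : c • pt2 a b = pt2 (c * a) (c * b) := by
  ext i; fin_cases i <;> rfl

lemma pt2_diag_mem_segment {s t : ℝ} (ht : 0 ≤ t) (hts : t ≤ s) :
    pt2 t t ∈ segment ℝ (pt2 0 0) (pt2 s s) := by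
  rcases hts.eq_or_lt with rfl | hlt
  · exact right_mem_segment ℝ _ _
  have hs : 0 < s := ht.trans_lt hlt
  rw [segment_eq_image', pt2_zero, sub_zero]
  refine ⟨t / s, ⟨div_nonneg ht hs.le, (div_le_one hs).2 hlt.le⟩, ?_⟩
  simp only [zero_add, smul_pt2, div_mul_cancel₀ t hs.ne']

lemma one_le_sqrt_five_div_two : 1 ≤ Real.sqrt (5 / 2) :=
  Real.one_le_sqrt.2 (by norm_num)

lemma exists_M33_eq_of_ne_one_one {a b : ℝ} (ha : a ∈ ({0, 1, 2} : Set ℝ))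
    (hb : b ∈ ({0, 1, 2} : Set ℝ)) (hab : ¬(a = 1 ∧ b = 1)) :
    ∃ i : Fin 8, M33 i.castSucc = pt2 a b := by
  simp only [Set.mem_insert_iff, Set.mem_singleton_iff] at ha hb
  rcases ha with rfl | rfl | rfl <;> rcases hb with rfl | rfl | rfl
  exacts [⟨7, rfl⟩, ⟨2, rfl⟩, ⟨5, rfl⟩, ⟨4, rfl⟩, absurd ⟨rfl, rfl⟩ hab, ⟨0, rfl⟩, ⟨1, rfl⟩,
    ⟨6, rfl⟩, ⟨3, rfl⟩]

/-- The chain `(1,2)-(2,0)-(0,1)-(2,2)-(1,0)-(0,2)-(2,1)-(0,0)-(√(5/2), √(5/2))` passes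
through all nine points of `{0,1,2} × {0,1,2}`. -/
theorem stmt8 :
    ∀ a b : ℝ, a ∈ ({0, 1, 2} : Set ℝ) → b ∈ ({0, 1, 2} : Set ℝ) →
      ∃ i : Fin 8, pt2 a b ∈ segment ℝ (M33 i.castSucc) (M33 i.succ) := by
  intro a b ha hb
  by_cases hab : a = 1 ∧ b = 1
  · obtain ⟨rfl, rfl⟩ := hab
    exact ⟨7, pt2_diag_mem_segment zero_le_one one_le_sqrt_five_div_two⟩
  · obtain ⟨i, hi⟩ := exists_M33_eq_of_ne_one_one ha hb hab
    exact ⟨i, hi ▸ left_mem_segment ℝ _ _⟩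
end

section
/- For x in the interval [2 − √3/2 − √((87 + 128√3)/498), (65(2−√3) − √(916√3 − 1549))/(8(5 − 2√3))], the discriminant (32√3 − 84)x² + (432 − 212√3)x + 336√3 − 601 is nonnegative. -/
/-- For `x` in the stated interval, the discriminant
`(32√3 − 84)x² + (432 − 212√3)x + 336√3 − 601` is nonnegative. -/
theorem stmt12 :
    ∀ x : ℝ,
      x ∈ Set.Icc (2 - Real.sqrt 3 / 2 - Real.sqrt ((87 + 128 * Real.sqrt 3) / 498))
        ((65 * (2 - Real.sqrt 3) - Real.sqrt (916 * Real.sqrt 3 - 1549)) /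
          (8 * (5 - 2 * Real.sqrt 3))) →
      0 ≤ (32 * Real.sqrt 3 - 84) * x ^ 2 + (432 - 212 * Real.sqrt 3) * x
            + 336 * Real.sqrt 3 - 601 := by
  intro x hx
  obtain ⟨hl, hu⟩ := hx
  set s := Real.sqrt 3 with hs
  have hs3 : s ^ 2 = 3 := Real.sq_sqrt (by norm_num)
  have hs0 : 0 ≤ s := Real.sqrt_nonneg 3
  have hslb : (1.73 : ℝ) ≤ s := by nlinarith
  have hsub : s ≤ 1.8 := by nlinarith
  set r1 := Real.sqrt ((87 + 128 * s) / 498) with hr1def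
  have hr1sq : r1 ^ 2 = (87 + 128 * s) / 498 := Real.sq_sqrt (by positivity)
  have hr10 : 0 ≤ r1 := Real.sqrt_nonneg _
  have hr1lb : (0.7 : ℝ) ≤ r1 := by nlinarith
  set r2 := Real.sqrt (916 * s - 1549) with hr2def
  have hr20 : 0 ≤ r2 := Real.sqrt_nonneg _
  have hden : (0 : ℝ) < 8 * (5 - 2 * s) := by nlinarith
  -- upper bound on x
  have hxu : x ≤ 1.5 := by
    have h1 : (65 * (2 - s) - r2) / (8 * (5 - 2 * s)) ≤ 1.5 := by
      rw [div_le_iff₀ hden]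
      nlinarith
    linarith
  -- |x - p| ≤ r1 where p = 2 - s/2
  have h2 : x - (2 - s / 2) ≤ r1 := by nlinarith
  have h3 : (2 - s / 2) - x ≤ r1 := by linarith
  have h4 : (x - (2 - s / 2)) ^ 2 ≤ r1 ^ 2 := by nlinarith
  have key : (32 * s - 84) * x ^ 2 + (432 - 212 * s) * x + 336 * s - 601
      = (84 - 32 * s) * (r1 ^ 2 - (x - (2 - s / 2)) ^ 2) := by
    rw [hr1sq]; linear_combination (-8 * s + 23213/249 - 32 * x) * hs3
  rw [key]
  have ha : (0 : ℝ) ≤ 84 - 32 * s := by nlinarith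
  nlinarith
end

section
/- The system y·(1 − x) + x = 1/2, d/dx[(2x − 1)·y·x] = 0 (with y expressed as y = (1 − 2x)/(2(1 − x))), and x > 1 has the unique solution x = (3 + √5)/4, y = (3 + √5)/2. -/
/-!
Writing `f t = (2t - 1)² t / (2(t - 1))`, the quotient rule gives
`f' t = (2t - 1)(4t² - 6t + 1) / (2(t - 1)²)`, so the critical points are `1/2` and
`(3 ± √5)/4`, and only `(3 + √5)/4` exceeds `1`. The first equation of the system just says
`y = (1 - 2x)/(2(1 - x))`, which at that point equals `(3 + √5)/2`.
-/

open Real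

lemma hasDerivAt_bbox_volume {x : ℝ} (hx : x ≠ 1) :
    HasDerivAt (fun t : ℝ => (2 * t - 1) * ((1 - 2 * t) / (2 * (1 - t))) * t)
      ((2 * x - 1) * (4 * x ^ 2 - 6 * x + 1) / (2 * (x - 1) ^ 2)) x := by
  have hx' : 1 - x ≠ 0 := sub_ne_zero.mpr hx.symm
  have hlin : HasDerivAt (fun t : ℝ => 2 * t - 1) 2 x := by
    simpa using ((hasDerivAt_id x).const_mul 2).sub_const 1
  have hnum : HasDerivAt (fun t : ℝ => 1 - 2 * t) (-2) x := by
    simpa using ((hasDerivAt_id x).const_mul 2).const_sub 1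
  have hden : HasDerivAt (fun t : ℝ => 2 * (1 - t)) (-2) x := by
    simpa using ((hasDerivAt_id x).const_sub 1).const_mul 2
  refine ((hlin.fun_mul (hnum.fun_div hden (by positivity))).fun_mul
    (hasDerivAt_id' x)).congr_deriv ?_
  have hx'' : x - 1 ≠ 0 := sub_ne_zero.mpr hx
  field_simp
  ring

lemma deriv_bbox_volume_eq_zero_iff {x : ℝ} (hx : x ≠ 1) :
    deriv (fun t : ℝ => (2 * t - 1) * ((1 - 2 * t) / (2 * (1 - t))) * t) x = 0 ↔
      (2 * x - 1) * (4 * x ^ 2 - 6 * x + 1) = 0 := by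
  have hx' : x - 1 ≠ 0 := sub_ne_zero.mpr hx
  rw [(hasDerivAt_bbox_volume hx).deriv, div_eq_zero_iff]
  simp [hx']

lemma cubic_root_gt_one_iff (x : ℝ) :
    (2 * x - 1) * (4 * x ^ 2 - 6 * x + 1) = 0 ∧ 1 < x ↔ x = (3 + √5) / 4 := by
  have h5 : √5 ^ 2 = 5 := sq_sqrt (by norm_num)
  have h5_gt : 2 < √5 := by nlinarith [sqrt_nonneg 5]
  have hfactor : (2 * x - 1) * (4 * x ^ 2 - 6 * x + 1) =
      (2 * x - 1) * (4 * x - 3 - √5) * (4 * x - 3 + √5) / 4 := by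
    linear_combination ((2 * x - 1) / 4) * h5
  constructor
  · rintro ⟨hroot, hx⟩
    rw [hfactor, div_eq_zero_iff] at hroot
    simp only [mul_eq_zero] at hroot
    rcases hroot with ((h | h) | h) | h <;> linarith
  · rintro rfl
    constructor
    · rw [hfactor]; ring
    · linarith

lemma sub_mul_add_eq_half_iff {x y : ℝ} (hx : x ≠ 1) :
    (1 - x) * y + x = 1 / 2 ↔ y = (1 - 2 * x) / (2 * (1 - x)) := by
  have hx' : 1 - x ≠ 0 := sub_ne_zero.mpr hx.symm
  have hden : 2 * (1 - x) ≠ 0 := by positivity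
  rw [eq_div_iff hden]
  constructor <;> intro h <;> linarith

lemma bbox_y_at_critical_point :
    (1 - 2 * ((3 + √5) / 4)) / (2 * (1 - (3 + √5) / 4)) = (3 + √5) / 2 := by
  have h5 : √5 ^ 2 = 5 := sq_sqrt (by norm_num)
  have hne : 1 - √5 ≠ 0 := by nlinarith [sqrt_nonneg 5]
  have hden : 2 * (1 - (3 + √5) / 4) ≠ 0 := fun h => hne (by linear_combination 2 * h)
  rw [div_eq_iff hden]
  linear_combination (1 / 4) * h5

/-- The system `(1 − x)·y + x = 1/2`, `d/dx[(2x − 1)·y(x)·x] = 0` with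
`y(x) = (1 − 2x)/(2(1 − x))`, and `x > 1` has the unique solution
`x = (3 + √5)/4`, `y = (3 + √5)/2`. -/
theorem stmt14 :
    ∀ x y : ℝ,
      ((1 - x) * y + x = 1 / 2 ∧
        y = (1 - 2 * x) / (2 * (1 - x)) ∧
        deriv (fun t : ℝ => (2 * t - 1) * ((1 - 2 * t) / (2 * (1 - t))) * t) x = 0 ∧
        1 < x)
      ↔ (x = (3 + Real.sqrt 5) / 4 ∧ y = (3 + Real.sqrt 5) / 2) := by
  intro x y
  constructor
  · rintro ⟨-, rfl, hcrit, hx⟩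
    obtain rfl := (cubic_root_gt_one_iff x).mp
      ⟨(deriv_bbox_volume_eq_zero_iff hx.ne').mp hcrit, hx⟩
    exact ⟨rfl, bbox_y_at_critical_point⟩
  · rintro ⟨rfl, rfl⟩
    obtain ⟨hroot, hx⟩ := (cubic_root_gt_one_iff _).mpr rfl
    have hy := bbox_y_at_critical_point.symm
    exact ⟨(sub_mul_add_eq_half_iff hx.ne').mpr hy, hy,
      (deriv_bbox_volume_eq_zero_iff hx.ne').mpr hroot, hx⟩
end
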